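/- Let n ≥ 4 be an even integer and k ≥ 1. Suppose H₁ and H₂ are affine hyperplanes in ℝ^{2k} such that the origin lies on neither, no point of P lies on H₁ ∪ H₂, and for every p ∈ P the segment between the origin and p meets H₁ ∪ H₂. Then there exists (u_1,…,u_k) ∈ {1,…,n}^k such that {p ∈ P : the segment from the origin to p meets H₁} = P(u_1,…,u_k) and {p ∈ P : the segment from the origin to p meets H₂} = P(u'_1,…,u'_k). -/

import Mathlib

/-!
For `b ≠ 0` and `p` off the hyperplane `{⟪a, x⟫ = b}`, the segment `[0, p]` meets it iff
`⟪a, p⟫ / b > 1`. On the `i`-th coordinate circle this quantity is a sinusoid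
`A cos θ + B sin θ` in the angle `θ` of the vertex: it changes sign under `θ ↦ θ + π`, and
its superlevel set `{> 1}` is convex along arcs shorter than `π`. Since every vertex is covered
by `H₁` or `H₂`, and neither hyperplane is met by both vertices of an antipodal pair, the
vertices seen by `H₂` are exactly those not seen by `H₁`, and the vertices seen by `H₁` contain
exactly one vertex of each antipodal pair. A set of vertices of the `2h`-gon with this property
that is convex along arcs shorter than a half-turn is a block of `h` consecutive vertices.
-/

open scoped RealInnerProductSpace
open Real

/-- The scaffolding point `p_{iu}` in `ℝ^{2k}`: its `i`-th coordinate pair is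
`(cos((u−1)·2π/n), sin((u−1)·2π/n))` and its other coordinates are `0`. -/
noncomputable def scafPt (n k : ℕ) (i : Fin k) (u : ℕ) :
    EuclideanSpace ℝ (Fin (2 * k)) :=
  (WithLp.equiv 2 (Fin (2 * k) → ℝ)).symm fun idx =>
    if (idx : ℕ) = 2 * (i : ℕ) then Real.cos (((u : ℝ) - 1) * (2 * Real.pi) / n)
    else if (idx : ℕ) = 2 * (i : ℕ) + 1 then Real.sin (((u : ℝ) - 1) * (2 * Real.pi) / n)
    else 0

/-- The scaffolding point set `P = {p_{iu} : 1 ≤ i ≤ k, 1 ≤ u ≤ n}`. -/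
noncomputable def scafSet (n k : ℕ) : Set (EuclideanSpace ℝ (Fin (2 * k))) :=
  {x | ∃ i : Fin k, ∃ u ∈ Finset.Icc 1 n, x = scafPt n k i u}

/-- The antipodal partner `u' ∈ {1,…,n}` of `u ∈ {1,…,n}`: the unique element of
`{1,…,n}` congruent to `u + n/2` modulo `n`. -/
def antip (n u : ℕ) : ℕ := (u - 1 + n / 2) % n + 1

/-- The almost antipodal partner `ū ∈ {1,…,n}` of `u ∈ {1,…,n}`: the unique element of
`{1,…,n}` congruent to `u + n/2 + 1` modulo `n`. -/
def almostAntip (n u : ℕ) : ℕ := (u - 1 + n / 2 + 1) % n + 1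

/-- The half of the scaffolding set selected by a tuple `(u_1,…,u_k) ∈ {1,…,n}^k`:
`P(u_1,…,u_k) = {p_{it} : 1 ≤ i ≤ k, t ∈ {1,…,n}, t ≡ u_i − s (mod n)` for some
`s ∈ {0,…,n/2−1}}`. -/
noncomputable def scafHalf (n k : ℕ) (U : Fin k → ℕ) :
    Set (EuclideanSpace ℝ (Fin (2 * k))) :=
  {x | ∃ i : Fin k, ∃ t ∈ Finset.Icc 1 n,
    (∃ s < n / 2, t + s ≡ U i [MOD n]) ∧ x = scafPt n k i t}

/-- The affine hyperplane `{x : ⟪a, x⟫ = b}`. -/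
def hyp {k : ℕ} (a : EuclideanSpace ℝ (Fin (2 * k))) (b : ℝ) :
    Set (EuclideanSpace ℝ (Fin (2 * k))) := {x | ⟪a, x⟫ = b}


theorem segment_zero_inter_nonempty_iff {E : Type*} [NormedAddCommGroup E]
    [InnerProductSpace ℝ E] {a p : E} {b : ℝ} (hb : b ≠ 0) (hp : ⟪a, p⟫ ≠ b) :
    (segment ℝ 0 p ∩ {x | ⟪a, x⟫ = b}).Nonempty ↔ 1 < ⟪a, p⟫ / b := by
  have hr : ⟪a, p⟫ / b ≠ 1 := by rwa [Ne, div_eq_one_iff_eq hb]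
  simp only [segment_eq_image, smul_zero, zero_add, Set.nonempty_def, Set.mem_inter_iff,
    Set.mem_image, Set.mem_ofPred_eq]
  constructor
  · rintro ⟨_, ⟨t, ⟨ht0, ht1⟩, rfl⟩, hx⟩
    rw [real_inner_smul_right] at hx
    have ht : t * (⟪a, p⟫ / b) = 1 := by rw [← mul_div_assoc, hx, div_self hb]
    have : t ≠ 0 := left_ne_zero_of_mul_eq_one ht
    have : 1 ≤ ⟪a, p⟫ / b := by nlinarith [lt_of_le_of_ne ht0 this.symm]
    exact lt_of_le_of_ne this hr.symm
  · intro h1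
    have hap : ⟪a, p⟫ ≠ 0 := by rintro h; rw [h, zero_div] at h1; linarith
    refine ⟨_, ⟨(⟪a, p⟫ / b)⁻¹, ⟨by positivity, inv_le_one_of_one_le₀ h1.le⟩, rfl⟩, ?_⟩
    rw [real_inner_smul_right, inv_div, div_mul_cancel₀ _ hap]

theorem lt_mul_cos_add_mul_sin_of_mem_Icc {A B c θ₁ θ₂ θ : ℝ} (hc : 0 ≤ c)
    (hθ : θ ∈ Set.Icc θ₁ θ₂) (hπ : θ₂ - θ₁ < π)
    (h₁ : c < A * cos θ₁ + B * sin θ₁) (h₂ : c < A * cos θ₂ + B * sin θ₂) :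
    c < A * cos θ + B * sin θ := by
  obtain ⟨hθ₁, hθ₂⟩ := hθ
  rcases hθ₁.eq_or_lt with rfl | hlt
  · exact h₁
  have hD : 0 < sin (θ₂ - θ₁) := sin_pos_of_pos_of_lt_pi (by linarith) hπ
  have hs₂ : 0 ≤ sin (θ₂ - θ) := sin_nonneg_of_nonneg_of_le_pi (by linarith) (by linarith)
  have hs₁ : 0 < sin (θ - θ₁) := sin_pos_of_pos_of_lt_pi (by linarith) (by linarith)
  have hsub : sin (θ₂ - θ₁) ≤ sin (θ₂ - θ) + sin (θ - θ₁) := by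
    have := sin_add (θ₂ - θ) (θ - θ₁)
    rw [sub_add_sub_cancel] at this
    nlinarith [cos_le_one (θ₂ - θ), cos_le_one (θ - θ₁)]
  -- the value at `θ` is a combination of the values at `θ₁, θ₂` with weights
  -- `sin (θ₂ - θ), sin (θ - θ₁) ≥ 0` whose sum is at least `sin (θ₂ - θ₁) > 0`
  have key : sin (θ₂ - θ₁) * (A * cos θ + B * sin θ) =
      sin (θ₂ - θ) * (A * cos θ₁ + B * sin θ₁) + sin (θ - θ₁) * (A * cos θ₂ + B * sin θ₂) := by
    simp only [sin_sub]; ring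
  nlinarith

def pairFst {k : ℕ} (i : Fin k) : Fin (2 * k) := ⟨2 * i, by omega⟩

def pairSnd {k : ℕ} (i : Fin k) : Fin (2 * k) := ⟨2 * i + 1, by omega⟩

/-- The angle of `p_{im}`, extended to all `m : ℤ` so that indices can be reduced modulo `n`. -/
noncomputable def vertexAngle (n : ℕ) (m : ℤ) : ℝ := ((m : ℝ) - 1) * (2 * π) / n

noncomputable def vertexValue (n : ℕ) (A B : ℝ) (m : ℤ) : ℝ :=
  A * cos (vertexAngle n m) + B * sin (vertexAngle n m)

theorem scafPt_eq (n k : ℕ) (i : Fin k) (u : ℕ) :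
    scafPt n k i u = EuclideanSpace.single (pairFst i) (cos (vertexAngle n u))
      + EuclideanSpace.single (pairSnd i) (sin (vertexAngle n u)) := by
  ext j
  simp only [scafPt, vertexAngle, PiLp.add_apply, PiLp.single_apply, Fin.ext_iff, pairFst,
    pairSnd, Int.cast_natCast]
  split_ifs <;> first | rfl | simp_all

theorem inner_scafPt {n k : ℕ} (a : EuclideanSpace ℝ (Fin (2 * k))) (i : Fin k) (u : ℕ) :
    ⟪a, scafPt n k i u⟫ = vertexValue n (a (pairFst i)) (a (pairSnd i)) u := by
  simp [scafPt_eq, inner_add_right, EuclideanSpace.inner_single_right, vertexValue, mul_comm]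

theorem vertexAngle_add {n : ℕ} (hn : n ≠ 0) (m e : ℤ) :
    vertexAngle n (m + e) = vertexAngle n m + e * (2 * π / n) := by
  simp only [vertexAngle, Int.cast_add]; field_simp; ring

theorem vertexValue_congr {n : ℕ} (A B : ℝ) {m m' : ℤ} (h : m ≡ m' [ZMOD n]) :
    vertexValue n A B m = vertexValue n A B m' := by
  rcases eq_or_ne n 0 with rfl | hn
  · simp [vertexValue, vertexAngle]
  obtain ⟨j, hj⟩ := (Int.modEq_iff_dvd.mp h)
  have : vertexAngle n m' = vertexAngle n m + j * (2 * π) := by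
    rw [show m' = m + n * j by omega, vertexAngle_add hn]; push_cast; field_simp
  rw [vertexValue, vertexValue, this, cos_add_int_mul_two_pi, sin_add_int_mul_two_pi]

theorem vertexValue_add_half {h : ℕ} (hh : h ≠ 0) (A B : ℝ) (m : ℤ) :
    vertexValue (2 * h) A B (m + h) = -vertexValue (2 * h) A B m := by
  have : vertexAngle (2 * h) (m + h) = vertexAngle (2 * h) m + π := by
    rw [vertexAngle_add (by omega)]; push_cast; field_simp
  rw [vertexValue, vertexValue, this, cos_add_pi, sin_add_pi]; ring

theorem one_lt_vertexValue_of_le_of_le {h : ℕ} {A B : ℝ} {m d e : ℤ} (he : 0 ≤ e)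
    (hed : e ≤ d) (hd : d < h) (hm : 1 < vertexValue (2 * h) A B m)
    (hmd : 1 < vertexValue (2 * h) A B (m + d)) :
    1 < vertexValue (2 * h) A B (m + e) := by
  have hh : 0 < h := by omega
  have hstep : 0 < 2 * π / (2 * h : ℕ) := by positivity
  have hdh : (d : ℝ) * (2 * π / (2 * h : ℕ)) < π := by
    calc (d : ℝ) * (2 * π / (2 * h : ℕ)) < h * (2 * π / (2 * h : ℕ)) := by
          gcongr; exact_mod_cast hd
      _ = π := by push_cast; field_simp
  rw [vertexValue, vertexAngle_add (by omega)] at hmd ⊢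
  refine lt_mul_cos_add_mul_sin_of_mem_Icc zero_le_one ⟨?_, ?_⟩ ?_ hm hmd
  · exact le_add_of_nonneg_right (mul_nonneg (by exact_mod_cast he) hstep.le)
  · gcongr
  · rwa [add_sub_cancel_left]

theorem exists_and_not_add_one {Q : ℤ → Prop} {m : ℤ} {j : ℕ} (hm : Q m)
    (hj : ¬Q (m + j)) : ∃ u, Q u ∧ ¬Q (u + 1) := by
  by_contra! hcon
  refine hj (Nat.rec (by simpa using hm) (fun i ih => ?_) j)
  push_cast
  rw [← add_assoc]
  exact hcon _ ih

theorem exists_forall_iff_emod_lt {h : ℕ} {Q : ℤ → Prop} (hanti : ∀ m, Q (m + h) ↔ ¬Q m)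
    (hconv : ∀ m d e : ℤ, 0 ≤ e → e ≤ d → d < h → Q m → Q (m + d) → Q (m + e)) :
    ∃ u : ℤ, ∀ m, Q m ↔ (u - m) % (2 * h) < h := by
  have hh : h ≠ 0 := by
    rintro rfl
    simpa using hanti 0
  have hper : Function.Periodic Q (2 * h) := fun m => by
    rw [two_mul, ← add_assoc, hanti, hanti, not_not]
  obtain ⟨m₀, hm₀⟩ : ∃ m₀, Q m₀ := by
    by_cases h0 : Q 0
    · exact ⟨0, h0⟩
    · exact ⟨_, (hanti 0).mpr h0⟩
  obtain ⟨u, hu, hu₁⟩ :=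
    exists_and_not_add_one hm₀ (j := h) fun hq => (hanti m₀).mp hq hm₀
  -- a gap at `u - s` would put `u - s + h` in `Q`, and the arc from `u` to it would cover `u + 1`
  have hblock : ∀ s : ℤ, 0 ≤ s → s < h → Q (u - s) := by
    intro s hs hsh
    by_contra hq
    rcases hs.eq_or_lt with rfl | hs
    · simp_all
    have := (hanti (u - s)).mpr hq
    refine hu₁ (hconv u (h - s) 1 zero_le_one (by omega) (by omega) hu ?_)
    rwa [add_sub_assoc', ← sub_add_eq_add_sub]
  refine ⟨u, fun m => ?_⟩
  set r := (u - m) % (2 * h)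
  have hr0 : 0 ≤ r := Int.emod_nonneg _ (by omega)
  have hm : Q m ↔ Q (u - r) := by
    have hdiv : r + 2 * h * ((u - m) / (2 * h)) = u - m := Int.emod_add_mul_ediv _ _
    rw [← hper.int_mul (-((u - m) / (2 * h))) (u - r), Int.cast_id]
    exact iff_of_eq (congrArg Q (by linear_combination hdiv))
  rw [hm]
  by_cases hrh : r < h
  · simp [hrh, hblock r hr0 hrh]
  · have hr : r < 2 * h := Int.emod_lt_of_pos _ (by omega)
    have := hblock (r - h) (by omega) (by omega)
    rw [show u - (r - h) = u - r + h by ring, hanti] at this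
    simp [hrh, this]

theorem exists_windows_of_cover {h : ℕ} (hh : h ≠ 0) {A₁ B₁ A₂ B₂ : ℝ}
    (hcover : ∀ m, 1 < vertexValue (2 * h) A₁ B₁ m ∨ 1 < vertexValue (2 * h) A₂ B₂ m) :
    ∃ u : ℤ, ∀ m, (1 < vertexValue (2 * h) A₁ B₁ m ↔ (u - m) % (2 * h) < h) ∧
      (1 < vertexValue (2 * h) A₂ B₂ m ↔ (u + h - m) % (2 * h) < h) := by
  have hanti : ∀ A B m,
      1 < vertexValue (2 * h) A B (m + h) → ¬1 < vertexValue (2 * h) A B m := by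
    intro A B m
    rw [vertexValue_add_half hh]
    intros
    linarith
  have hQ₂ : ∀ m, 1 < vertexValue (2 * h) A₂ B₂ m ↔ ¬1 < vertexValue (2 * h) A₁ B₁ m :=
    fun m => ⟨fun h₂ h₁ => (hcover (m + h)).elim (hanti _ _ _ · h₁) (hanti _ _ _ · h₂),
      (hcover m).resolve_left⟩
  have hQ₁ : ∀ m : ℤ,
      1 < vertexValue (2 * h) A₁ B₁ (m + h) ↔ ¬1 < vertexValue (2 * h) A₁ B₁ m :=
    fun m => ⟨hanti _ _ _, fun h₁ => (hcover (m + h)).resolve_right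
      fun h₂ => hanti _ _ _ h₂ ((hQ₂ m).mpr h₁)⟩
  obtain ⟨u, hu⟩ := exists_forall_iff_emod_lt (Q := fun m => 1 < vertexValue (2 * h) A₁ B₁ m)
    hQ₁ fun _ _ _ => one_lt_vertexValue_of_le_of_le
  refine ⟨u, fun m => ⟨hu m, ?_⟩⟩
  rw [hQ₂, ← hQ₁, hu, show u - (m + h) = u + h - m + (-1) * (2 * h) by ring,
    Int.add_mul_emod_self_right]

theorem exists_mem_Icc_intCast_modEq {n : ℕ} (hn : n ≠ 0) (m : ℤ) :
    ∃ t ∈ Finset.Icc 1 n, (t : ℤ) ≡ m [ZMOD n] := by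
  have h0 : 0 ≤ (m - 1) % n := Int.emod_nonneg _ (by omega)
  have hlt : (m - 1) % n < n := Int.emod_lt_of_pos _ (by omega)
  refine ⟨((m - 1) % n).toNat + 1, Finset.mem_Icc.mpr ⟨by omega, by omega⟩, ?_⟩
  have := (Int.mod_modEq (m - 1) n).add_right 1
  rwa [sub_add_cancel, ← Int.toNat_of_nonneg h0] at this

theorem exists_lt_add_modEq_iff {n h t U : ℕ} {u : ℤ} (hn : n ≠ 0) (hh : h ≤ n)
    (hU : (U : ℤ) ≡ u [ZMOD n]) :
    (∃ s < h, t + s ≡ U [MOD n]) ↔ (u - t) % n < h := by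
  constructor
  · rintro ⟨s, hs, hst⟩
    have : (s : ℤ) ≡ u - t [ZMOD n] := by
      have := ((Int.natCast_modEq_iff.mpr hst).trans hU).sub_right t
      push_cast at this
      rwa [add_sub_cancel_left] at this
    rw [← this.eq, Int.emod_eq_of_lt (by omega) (by omega)]
    exact_mod_cast hs
  · intro hlt
    have h0 : 0 ≤ (u - t) % n := Int.emod_nonneg _ (by omega)
    refine ⟨((u - t) % n).toNat, by omega, ?_⟩
    rw [← Int.natCast_modEq_iff]
    push_cast
    rw [Int.toNat_of_nonneg h0]
    have := (Int.mod_modEq (u - t) n).add_left t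
    rw [add_sub_cancel] at this
    exact this.trans hU.symm

theorem antip_modEq {n u : ℕ} (hu : 1 ≤ u) : antip n u ≡ u + n / 2 [MOD n] := by
  have := (Nat.mod_modEq (u - 1 + n / 2) n).add_right 1
  rwa [show u - 1 + n / 2 + 1 = u + n / 2 by omega] at this

theorem segment_inter_hyp_scafPt_nonempty_iff {n k : ℕ} {a : EuclideanSpace ℝ (Fin (2 * k))}
    {b : ℝ} (hb : b ≠ 0) {i : Fin k} {u : ℕ} (hu : scafPt n k i u ∉ hyp a b) :
    (segment ℝ 0 (scafPt n k i u) ∩ hyp a b).Nonempty ↔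
      1 < vertexValue n (a (pairFst i) / b) (a (pairSnd i) / b) u := by
  rw [hyp, segment_zero_inter_nonempty_iff hb hu, inner_scafPt, vertexValue, vertexValue]
  ring_nf

theorem exists_scafPt_windows {h k : ℕ} (hh : h ≠ 0)
    {a₁ a₂ : EuclideanSpace ℝ (Fin (2 * k))} {b₁ b₂ : ℝ} (hb₁ : b₁ ≠ 0) (hb₂ : b₂ ≠ 0) (i : Fin k)
    (hP : ∀ t ∈ Finset.Icc 1 (2 * h), scafPt (2 * h) k i t ∉ hyp a₁ b₁ ∪ hyp a₂ b₂)
    (hsep : ∀ t ∈ Finset.Icc 1 (2 * h),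
      (segment ℝ 0 (scafPt (2 * h) k i t) ∩ (hyp a₁ b₁ ∪ hyp a₂ b₂)).Nonempty) :
    ∃ U ∈ Finset.Icc 1 (2 * h), ∀ t ∈ Finset.Icc 1 (2 * h),
      ((segment ℝ 0 (scafPt (2 * h) k i t) ∩ hyp a₁ b₁).Nonempty ↔
        ∃ s < 2 * h / 2, t + s ≡ U [MOD 2 * h]) ∧
      ((segment ℝ 0 (scafPt (2 * h) k i t) ∩ hyp a₂ b₂).Nonempty ↔
        ∃ s < 2 * h / 2, t + s ≡ antip (2 * h) U [MOD 2 * h]) := by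
  have hn : 2 * h ≠ 0 := by omega
  have hmeets₁ := fun t ht =>
    segment_inter_hyp_scafPt_nonempty_iff hb₁ fun h => hP t ht (.inl h)
  have hmeets₂ := fun t ht =>
    segment_inter_hyp_scafPt_nonempty_iff hb₂ fun h => hP t ht (.inr h)
  obtain ⟨u, hu⟩ := exists_windows_of_cover hh fun m => by
    obtain ⟨t, ht, htm⟩ := exists_mem_Icc_intCast_modEq hn m
    have := hsep t ht
    rwa [Set.inter_union_distrib_left, Set.union_nonempty, hmeets₁ t ht, hmeets₂ t ht,
      vertexValue_congr _ _ htm, vertexValue_congr _ _ htm] at this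
  obtain ⟨U, hU, hUu⟩ := exists_mem_Icc_intCast_modEq hn u
  have hU' : (antip (2 * h) U : ℤ) ≡ u + h [ZMOD (2 * h : ℕ)] := by
    have := Int.natCast_modEq_iff.mpr (antip_modEq (n := 2 * h) (Finset.mem_Icc.mp hU).1)
    rw [Nat.mul_div_cancel_left _ two_pos] at this
    push_cast at this ⊢
    exact this.trans (hUu.add_right _)
  refine ⟨U, hU, fun t ht => ⟨?_, ?_⟩⟩
  · rw [hmeets₁ t ht, (hu t).1, Nat.mul_div_cancel_left _ two_pos,
      exists_lt_add_modEq_iff hn (by omega) hUu]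
    norm_cast
  · rw [hmeets₂ t ht, (hu t).2, Nat.mul_div_cancel_left _ two_pos,
      exists_lt_add_modEq_iff hn (by omega) hU']
    norm_cast

theorem sep_scafSet_eq_scafHalf {n k : ℕ} {P : EuclideanSpace ℝ (Fin (2 * k)) → Prop}
    {U : Fin k → ℕ}
    (hP : ∀ i, ∀ t ∈ Finset.Icc 1 n,
      P (scafPt n k i t) ↔ ∃ s < n / 2, t + s ≡ U i [MOD n]) :
    {p ∈ scafSet n k | P p} = scafHalf n k U := by
  ext p
  constructor
  · rintro ⟨⟨i, t, ht, rfl⟩, hp⟩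
    exact ⟨i, t, ht, (hP i t ht).mp hp, rfl⟩
  · rintro ⟨i, t, ht, hs, rfl⟩
    exact ⟨⟨i, t, ht, rfl⟩, (hP i t ht).mpr hs⟩

theorem separating_pairs_structure_general (n k : ℕ) (hn : 4 ≤ n) (hneven : Even n)
    (a₁ a₂ : EuclideanSpace ℝ (Fin (2 * k))) (b₁ b₂ : ℝ)
    (h0 : (0 : EuclideanSpace ℝ (Fin (2 * k))) ∉ hyp a₁ b₁ ∪ hyp a₂ b₂)
    (hP : ∀ p ∈ scafSet n k, p ∉ hyp a₁ b₁ ∪ hyp a₂ b₂)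
    (hsep : ∀ p ∈ scafSet n k,
      (segment ℝ 0 p ∩ (hyp a₁ b₁ ∪ hyp a₂ b₂)).Nonempty) :
    ∃ U : Fin k → ℕ, (∀ m, U m ∈ Finset.Icc 1 n) ∧
      {p ∈ scafSet n k | (segment ℝ 0 p ∩ hyp a₁ b₁).Nonempty} = scafHalf n k U ∧
      {p ∈ scafSet n k | (segment ℝ 0 p ∩ hyp a₂ b₂).Nonempty} =
        scafHalf n k (fun m => antip n (U m)) := by
  obtain ⟨h, rfl⟩ := hneven.two_dvd
  have hb₁ : b₁ ≠ 0 := fun hb => h0 (.inl (by simp [hyp, hb]))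
  have hb₂ : b₂ ≠ 0 := fun hb => h0 (.inr (by simp [hyp, hb]))
  choose U hU hwindows using fun i => exists_scafPt_windows (by omega) hb₁ hb₂ i
    (fun t ht => hP _ ⟨i, t, ht, rfl⟩) (fun t ht => hsep _ ⟨i, t, ht, rfl⟩)
  exact ⟨U, hU, sep_scafSet_eq_scafHalf fun i t ht => (hwindows i t ht).1,
    sep_scafSet_eq_scafHalf fun i t ht => (hwindows i t ht).2⟩

/-- If two affine hyperplanes `H₁, H₂`, neither through the origin nor through any point
of `P`, are such that every segment from the origin to a point of `P` meets `H₁ ∪ H₂`,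
then there is a tuple `(u_1,…,u_k) ∈ {1,…,n}^k` with: the points of `P` whose segment to
the origin meets `H₁` are exactly `P(u_1,…,u_k)`, and those whose segment meets `H₂` are
exactly `P(u'_1,…,u'_k)`. -/
theorem separating_pairs_structure (n k : ℕ) (hn : 4 ≤ n) (hneven : Even n) (hk : 1 ≤ k)
    (a₁ a₂ : EuclideanSpace ℝ (Fin (2 * k))) (b₁ b₂ : ℝ)
    (ha₁ : a₁ ≠ 0) (ha₂ : a₂ ≠ 0)
    (h0 : (0 : EuclideanSpace ℝ (Fin (2 * k))) ∉ hyp a₁ b₁ ∪ hyp a₂ b₂)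
    (hP : ∀ p ∈ scafSet n k, p ∉ hyp a₁ b₁ ∪ hyp a₂ b₂)
    (hsep : ∀ p ∈ scafSet n k,
      (segment ℝ 0 p ∩ (hyp a₁ b₁ ∪ hyp a₂ b₂)).Nonempty) :
    ∃ U : Fin k → ℕ, (∀ m, U m ∈ Finset.Icc 1 n) ∧
      {p ∈ scafSet n k | (segment ℝ 0 p ∩ hyp a₁ b₁).Nonempty} = scafHalf n k U ∧
      {p ∈ scafSet n k | (segment ℝ 0 p ∩ hyp a₂ b₂).Nonempty} =
        scafHalf n k (fun m => antip n (U m)) :=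
  separating_pairs_structure_general n k hn hneven a₁ a₂ b₁ b₂ h0 hP hsep
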